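/- For all positive integers Δ and k there is a constant c > 0 such that if a graph of (k, Δ)-almost bounded degree has a path of order n, then it has an induced path of order at least c·log₂ n. -/

import Mathlib

open SimpleGraph Real

/-- `G` has a (not necessarily induced) path on `n` vertices. -/
def HasPathOfOrder {V : Type*} (G : SimpleGraph V) (n : ℕ) : Prop :=
  ∃ (u v : V) (p : G.Walk u v), p.IsPath ∧ p.length + 1 = n

/-- `G` has a Hamiltonian path. -/
def HasHamPath {V : Type*} (G : SimpleGraph V) : Prop :=
  ∃ (u v : V) (p : G.Walk u v), p.IsPath ∧ ∀ w, w ∈ p.support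

/-- `G` has an induced path on at least `r` vertices (an induced subgraph isomorphic to a
path graph on `m ≥ r` vertices). -/
def HasInducedPathGE {V : Type*} (G : SimpleGraph V) (r : ℝ) : Prop :=
  ∃ m : ℕ, r ≤ (m : ℝ) ∧ Nonempty (pathGraph m ↪g G)

/-- A tree (or path) representation of `G` over the graph `T`: every vertex `v` of `G` has a
nonempty connected model `model v ⊆ V(T)`, and models of adjacent vertices intersect. -/
structure TreeRep {V N : Type*} (G : SimpleGraph V) (T : SimpleGraph N) where
  model : V → Set N
  model_connected : ∀ v, (T.induce (model v)).Connected
  adj_meet : ∀ ⦃u v⦄, G.Adj u v → (model u ∩ model v).Nonempty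

namespace TreeRep

variable {V N : Type*} {G : SimpleGraph V} {T : SimpleGraph N}

/-- The bag of the representation at a node `t`. -/
def bag (R : TreeRep G T) (t : N) : Set V := {v | t ∈ R.model v}

/-- The representation has width less than `k`, i.e. all bags have at most `k` vertices. -/
def WidthLT (R : TreeRep G T) (k : ℕ) : Prop := ∀ t, (R.bag t).ncard ≤ k

/-- The representation has width at most `k`, i.e. all bags have at most `k + 1` vertices. -/
def WidthLE (R : TreeRep G T) (k : ℕ) : Prop := ∀ t, (R.bag t).ncard ≤ k + 1

/-- The weight of a path `p` of `T`: the number of vertices of `G` whose model meets `p`. -/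
noncomputable def pathWeight (R : TreeRep G T) {x y : N} (p : T.Walk x y) : ℕ :=
  {v : V | ∃ t ∈ p.support, t ∈ R.model v}.ncard

/-- A representation is varied if no bag is contained in the bag at a neighboring node. -/
def Varied (R : TreeRep G T) : Prop := ∀ ⦃t t'⦄, T.Adj t t' → ¬ R.bag t ⊆ R.bag t'

/-- The representation has adhesion less than `a`: the adhesion set of every edge of `T`
has fewer than `a` vertices. -/
def AdhesionLT (R : TreeRep G T) (a : ℕ) : Prop :=
  ∀ ⦃t t'⦄, T.Adj t t' → (R.bag t ∩ R.bag t').ncard < a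

/-- The torso of the representation at a node `t`: the subgraph induced on the bag at `t`
together with all edges inside adhesion sets of edges of `T` incident to `t`. -/
def torso (R : TreeRep G T) (t : N) : SimpleGraph (R.bag t) :=
  SimpleGraph.fromRel (fun u v =>
    G.Adj u v ∨ ∃ t', T.Adj t t' ∧ (u : V) ∈ R.bag t' ∧ (v : V) ∈ R.bag t')

end TreeRep

/-- `G` has pathwidth less than `k`: it has a representation over a path all of whose bags
have at most `k` vertices. -/
def PathwidthLT {V : Type*} (G : SimpleGraph V) (k : ℕ) : Prop :=
  ∃ (m : ℕ) (R : TreeRep G (pathGraph (m + 1))), R.WidthLT k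

/-- `G` has treewidth less than `k`: it has a representation over a tree all of whose bags
have at most `k` vertices. -/
def TreewidthLT {V : Type*} (G : SimpleGraph V) (k : ℕ) : Prop :=
  ∃ (N : Type) (_ : Fintype N) (T : SimpleGraph N), T.IsTree ∧
    ∃ R : TreeRep G T, R.WidthLT k

/-- `G` has treewidth at most `k`. -/
def TreewidthLE {V : Type*} (G : SimpleGraph V) (k : ℕ) : Prop :=
  ∃ (N : Type) (_ : Fintype N) (T : SimpleGraph N), T.IsTree ∧
    ∃ R : TreeRep G T, R.WidthLE k

/-- A leaf of a graph: a vertex with at most one neighbor. -/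
def IsLeafNode {N : Type*} (T : SimpleGraph N) (l : N) : Prop :=
  (T.neighborSet l).Subsingleton

/-- `H` is obtained from `G` by a sequence of edge contractions: there is a surjection
from `V(G)` onto `V(H)` with connected fibers inducing the adjacency of `H`. -/
def IsContraction {W V : Type*} (H : SimpleGraph W) (G : SimpleGraph V) : Prop :=
  ∃ f : V → W, Function.Surjective f ∧
    (∀ w : W, (G.induce (f ⁻¹' {w})).Connected) ∧
    (∀ x y : W, H.Adj x y ↔ x ≠ y ∧ ∃ u v : V, f u = x ∧ f v = y ∧ G.Adj u v)

/-- `G` is an interval graph: the intersection graph of a family of real intervals. -/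
def IsIntervalGraph {V : Type*} (G : SimpleGraph V) : Prop :=
  ∃ l r : V → ℝ, (∀ v, l v ≤ r v) ∧
    ∀ u v : V, G.Adj u v ↔ u ≠ v ∧ max (l u) (l v) ≤ min (r u) (r v)

/-- The internal vertices of a walk: vertices of the walk distinct from its two endpoints. -/
def WalkInternal {V : Type*} {G : SimpleGraph V} {x y : V} (p : G.Walk x y) : Set V :=
  {w | w ∈ p.support ∧ w ≠ x ∧ w ≠ y}

/-- `H` is a topological minor of `G`: there are branch vertices `φ u` for `u ∈ V(H)` and
internally disjoint paths of `G` joining them, one for each edge of `H`. -/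
def IsTopMinor {W V : Type*} (H : SimpleGraph W) (G : SimpleGraph V) : Prop :=
  ∃ (φ : W ↪ V) (P : ∀ ⦃u v : W⦄, H.Adj u v → G.Walk (φ u) (φ v)),
    (∀ ⦃u v⦄ (h : H.Adj u v), (P h).IsPath) ∧
    (∀ ⦃u v⦄ (h : H.Adj u v), P h.symm = (P h).reverse) ∧
    (∀ ⦃u v⦄ (h : H.Adj u v), ∀ w ∈ WalkInternal (P h), w ∉ Set.range φ) ∧
    (∀ ⦃u v u' v'⦄ (h : H.Adj u v) (h' : H.Adj u' v'), s(u, v) ≠ s(u', v') →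
      ∀ w ∈ WalkInternal (P h), w ∉ WalkInternal (P h'))

/-- `H` is (an isomorphic copy of) a subgraph of `G`. -/
def ContainsSubgraphCopy {A B : Type*} (H : SimpleGraph A) (G : SimpleGraph B) : Prop :=
  ∃ f : A ↪ B, ∀ u v : A, H.Adj u v → G.Adj (f u) (f v)

/-- `G` is `k`-degenerate: every (induced) subgraph has a vertex of degree at most `k`. -/
def Degenerate {V : Type*} (G : SimpleGraph V) (k : ℕ) : Prop :=
  ∀ s : Set V, s.Nonempty → ∃ v ∈ s, {w | w ∈ s ∧ G.Adj v w}.ncard ≤ k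

/-- The cycle on `ZMod m` (for `m ≥ 3` this is the cycle graph on `m` vertices). -/
def ringGraph (m : ℕ) : SimpleGraph (ZMod m) :=
  SimpleGraph.fromRel (fun i j => j = i + 1)

/-- Cliquewidth expressions with labels in `Fin k`. -/
inductive CWExpr (k : ℕ) where
  | vertex (l : Fin k) : CWExpr k
  | union (e₁ e₂ : CWExpr k) : CWExpr k
  | addEdges (i j : Fin k) (hij : i ≠ j) (e : CWExpr k) : CWExpr k
  | relabel (f : Fin k → Fin k) (e : CWExpr k) : CWExpr k

namespace CWExpr

variable {k : ℕ}

/-- The vertex set of the graph described by a cliquewidth expression. -/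
def verts : CWExpr k → Type
  | vertex _ => Unit
  | union e₁ e₂ => e₁.verts ⊕ e₂.verts
  | addEdges _ _ _ e => e.verts
  | relabel _ e => e.verts

/-- The labelling of the vertices described by a cliquewidth expression. -/
def label : (e : CWExpr k) → e.verts → Fin k
  | vertex l, _ => l
  | union e₁ _, Sum.inl x => e₁.label x
  | union _ e₂, Sum.inr x => e₂.label x
  | addEdges _ _ _ e, x => e.label x
  | relabel f e, x => f (e.label x)

/-- The adjacency relation described by a cliquewidth expression. -/
def adj : (e : CWExpr k) → e.verts → e.verts → Prop
  | vertex _, _, _ => False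
  | union e₁ _, Sum.inl x, Sum.inl y => e₁.adj x y
  | union _ e₂, Sum.inr x, Sum.inr y => e₂.adj x y
  | union _ _, _, _ => False
  | addEdges i j _ e, x, y =>
      e.adj x y ∨ (e.label x = i ∧ e.label y = j) ∨ (e.label x = j ∧ e.label y = i)
  | relabel _ e, x, y => e.adj x y

/-- The graph described by a cliquewidth expression. -/
def graph (e : CWExpr k) : SimpleGraph e.verts := SimpleGraph.fromRel e.adj

end CWExpr

/-- `G` has cliquewidth at most `k`: it is isomorphic to the graph of a cliquewidth
expression with at most `k` labels. -/
def CliquewidthLE {V : Type*} (G : SimpleGraph V) (k : ℕ) : Prop :=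
  ∃ e : CWExpr k, Nonempty (G ≃g e.graph)

/-- `G` has `(k, Δ)`-almost bounded degree: removing at most `k` vertices yields a graph of
maximum degree at most `Δ`. -/
def AlmostBoundedDegree {V : Type*} (G : SimpleGraph V) (k Δ : ℕ) : Prop :=
  ∃ X : Set V, X.ncard ≤ k ∧ ∀ v ∉ X, {w | w ∉ X ∧ G.Adj v w}.ncard ≤ Δ

/-- An embedding scheme for `H`: a rotation system (a permutation of the darts that is,
around each vertex, a single cycle on the darts leaving that vertex) together with a
signature on the edges. -/
structure EmbScheme {W : Type*} (H : SimpleGraph W) where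
  rot : Equiv.Perm H.Dart
  rot_fst : ∀ d : H.Dart, (rot d).fst = d.fst
  rot_cyclic : ∀ d d' : H.Dart, d.fst = d'.fst → ∃ n : ℕ, (rot ^ n) d = d'
  sign : Sym2 W → Bool

namespace EmbScheme

variable {W : Type*} {H : SimpleGraph W}

/-- The face-tracing step of an embedding scheme, acting on darts with a direction. -/
def faceStep (S : EmbScheme H) : H.Dart × Bool → H.Dart × Bool :=
  fun p =>
    let s' := xor p.2 (S.sign p.1.edge)
    ((if s' then S.rot.symm p.1.symm else S.rot p.1.symm), s')

/-- The number of orbits of a function. -/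
noncomputable def orbitCount {α : Type*} (f : α → α) : ℕ :=
  Nat.card (Quotient (Relation.EqvGen.setoid (fun x y => f x = y)))

/-- The scheme describes an embedding of `H` in a surface of Euler genus at most `g`.
Isolated vertices each bound one face; every other face is traced twice by `faceStep`,
so the number of faces is `orbitCount (faceStep) / 2` plus the number of isolated
vertices, and the Euler genus of the embedding is `2c - |V| + |E| - F`. -/
def GenusLE (S : EmbScheme H) (g : ℕ) : Prop :=
  2 * Nat.card H.ConnectedComponent + Nat.card H.edgeSet ≤
    g + Nat.card W +
      (orbitCount S.faceStep / 2 + Nat.card {v : W | ∀ w, ¬ H.Adj v w})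

/-- The cycle `e 0, e 1, …, e (m-1)` is a facial cycle of the embedding scheme `S`:
its consecutive darts are consecutive in a face traversal. -/
def IsFacialCycle (S : EmbScheme H) {m : ℕ} (e : ZMod m → W)
    (hadj : ∀ x : ZMod m, H.Adj (e x) (e (x + 1))) : Prop :=
  ∃ b : ZMod m → Bool, ∀ x : ZMod m,
    S.faceStep (⟨(e x, e (x + 1)), hadj x⟩, b x) =
      (⟨(e (x + 1), e (x + 1 + 1)), hadj (x + 1)⟩, b (x + 1))

end EmbScheme

/-- `Hs` has a `C`-vortex of width less than `k`, where `C` is the cycle of `G₀` given by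
`e`: the vertices common to `Hs` and `G₀` are exactly those of `C`, and `Hs` has a cycle
representation over `C` in which the model of each vertex of `C` contains that vertex and
every bag has at most `k` vertices. -/
def IsVortex {V : Type*} {G : SimpleGraph V} (Hs G₀ : G.Subgraph) {m : ℕ}
    (e : ZMod m → G₀.verts) (k : ℕ) : Prop :=
  Hs.verts ∩ G₀.verts = Subtype.val '' Set.range e ∧
  ∃ model : Hs.verts → Set (ZMod m),
    (∀ v, ((ringGraph m).induce (model v)).Connected) ∧
    (∀ (x : ZMod m) (v : Hs.verts), (e x : V) = (v : V) → x ∈ model v) ∧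
    (∀ ⦃u v⦄, Hs.coe.Adj u v → (model u ∩ model v).Nonempty) ∧
    (∀ t : ZMod m, {v : Hs.verts | t ∈ model v}.ncard ≤ k)

/-- `G` is `(g, p, a, k)`-almost-embeddable. -/
def AlmostEmbeddable {V : Type*} (G : SimpleGraph V) (g p a k : ℕ) : Prop :=
  ∃ A : Set V, A.ncard ≤ a ∧
  ∃ s : ℕ, s ≤ p ∧
  ∃ (G₀ : G.Subgraph) (Gv : Fin s → G.Subgraph),
    (G₀ ⊔ ⨆ i, Gv i) = (⊤ : G.Subgraph).deleteVerts A ∧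
    (∀ i j, i ≠ j → Disjoint (Gv i).verts (Gv j).verts) ∧
    ∃ S : EmbScheme G₀.coe, S.GenusLE g ∧
    ∃ (m : Fin s → ℕ) (e : ∀ i, ZMod (m i) → G₀.verts)
      (hadj : ∀ i x, G₀.coe.Adj (e i x) (e i (x + 1))),
      (∀ i, 3 ≤ m i) ∧
      (∀ i, Function.Injective (e i)) ∧
      (∀ i, S.IsFacialCycle (e i) (hadj i)) ∧
      (∀ i j, i ≠ j → Disjoint (Set.range (e i)) (Set.range (e j))) ∧
      (∀ i, IsVortex (Gv i) G₀ (e i) k)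

/-!
Delete a set `X` of at most `k` vertices so that `G - X` has maximum degree at most `Δ`.
A path on `n` vertices has at least `n - k` vertices outside `X`, and every time it leaves `X`
it can enter a new component of `G - X`, so these vertices lie in at most `k + 1` components
and one component `C` contains a fraction `1 / (k + 1)` of them. In a graph of maximum degree
`Δ` the ball of radius `D` has at most `(Δ + 1) ^ D` vertices, so some vertex of `C` is at
distance `D ≳ log_{Δ+1} (n / (2k + 1))` from a fixed one; a shortest path realising this
distance is an induced path of `G - X`, hence of `G`.
-/

theorem List.Nodup.countP_mem_le_ncard {α : Type*} {l : List α} (hl : l.Nodup) {X : Set α}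
    [DecidablePred (· ∈ X)] (hX : X.Finite) : l.countP (· ∈ X) ≤ X.ncard := by
  classical
  rw [List.countP_eq_length_filter, ← List.toFinset_card_of_nodup (hl.filter _),
    ← Set.ncard_coe_finset]
  exact Set.ncard_le_ncard (fun x hx => by simp_all) hX

theorem Set.exists_ncard_le_mul_ncard_fiber {α β : Type*} {s : Set α} (hs : s.Finite)
    (hne : s.Nonempty) (f : α → β) :
    ∃ a ∈ s, s.ncard ≤ (f '' s).ncard * {x ∈ s | f x = f a}.ncard := by
  classical
  obtain ⟨t, rfl⟩ := hs.exists_finset_coe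
  obtain ⟨a, ha, hmax⟩ :=
    t.exists_max_image (fun a => ({x ∈ t | f x = f a} : Finset α).card) (by simpa using hne)
  refine ⟨a, ha, ?_⟩
  have := t.card_le_mul_card_image (f := f) _ (by
    simp only [Finset.mem_image]
    rintro _ ⟨b, hb, rfl⟩
    exact hmax b hb)
  simpa [← Finset.coe_image, ← Finset.coe_filter, mul_comm] using this

namespace SimpleGraph

variable {V : Type*} {G : SimpleGraph V} {u v : V}

namespace Walk

lemma dist_getVert_of_length_eq_dist (p : G.Walk u v) (hp : p.length = G.dist u v) {i : ℕ}
    (hi : i ≤ p.length) : G.dist u (p.getVert i) = i := by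
  rw [← length_eq_dist_of_subwalk hp (p.isSubwalk_take i), take_length, min_eq_left hi]

def pathGraphEmbeddingOfLengthEqDist (p : G.Walk u v) (hp : p.length = G.dist u v) :
    pathGraph (p.length + 1) ↪g G where
  toFun i := p.getVert i
  inj' i j hij := by
    have hi := p.dist_getVert_of_length_eq_dist hp (Nat.lt_succ_iff.mp i.2)
    have hj := p.dist_getVert_of_length_eq_dist hp (Nat.lt_succ_iff.mp j.2)
    simp only at hij
    exact Fin.ext (hi.symm.trans (hij ▸ hj))
  map_rel_iff' {i j} := by
    have hi := p.dist_getVert_of_length_eq_dist hp (Nat.lt_succ_iff.mp i.2)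
    have hj := p.dist_getVert_of_length_eq_dist hp (Nat.lt_succ_iff.mp j.2)
    change G.Adj (p.getVert i) (p.getVert j) ↔ _
    rw [pathGraph_adj]
    constructor
    · intro hadj
      have hne : (i : ℕ) ≠ j := fun h => hadj.ne (by rw [h])
      have := hadj.diff_dist_adj (u := u)
      omega
    · rintro (h | h)
      · simpa [← h] using p.adj_getVert_succ (i := i) (by omega)
      · simpa [← h] using (p.adj_getVert_succ (i := j) (by omega)).symm

end Walk

theorem ncard_ball_le [Finite V] {Δ : ℕ} (hdeg : ∀ v, (G.neighborSet v).ncard ≤ Δ) (c : V)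
    (r : ℕ) : (G.ball c (r + 1)).ncard ≤ (Δ + 1) ^ r := by
  induction r with
  | zero => simp
  | succ r ih =>
    classical
    set B := (G.ball c (r + 1)).toFinite.toFinset
    have hsub : G.ball c (r + 1 + 1) ⊆ ⋃ y ∈ B, insert y (G.neighborSet y) := by
      intro w hw
      rw [mem_ball] at hw
      obtain ⟨q, hq⟩ := exists_walk_of_edist_ne_top (ne_top_of_lt hw)
      cases q with
      | nil => exact Set.mem_biUnion (x := c) (by simp [B]) (Set.mem_insert _ _)
      | @cons _ y _ h q =>
        have hlen : q.length < r + 1 := by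
          rw [← hq] at hw
          exact_mod_cast (by simpa using hw : (q.length : ℕ∞) < r + 1)
        refine Set.mem_biUnion (x := y) ?_ (Set.mem_insert_of_mem _ h.symm)
        simpa [B] using (edist_le q).trans_lt (by exact_mod_cast hlen)
    calc (G.ball c (r + 1 + 1)).ncard
        ≤ (⋃ y ∈ B, insert y (G.neighborSet y)).ncard := Set.ncard_le_ncard hsub (Set.toFinite _)
      _ ≤ ∑ y ∈ B, (insert y (G.neighborSet y)).ncard := Finset.set_ncard_biUnion_le _ _
      _ ≤ ∑ _y ∈ B, (Δ + 1) :=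
          Finset.sum_le_sum fun y _ => (Set.ncard_insert_le _ _).trans (by simpa using hdeg y)
      _ = B.card * (Δ + 1) := by simp
      _ ≤ (Δ + 1) ^ r * (Δ + 1) := by rw [← Set.ncard_eq_toFinset_card]; gcongr
      _ = (Δ + 1) ^ (r + 1) := (pow_succ _ _).symm

theorem exists_pathGraph_embedding_of_forall_reachable [Finite V] {Δ : ℕ}
    (hdeg : ∀ v, (G.neighborSet v).ncard ≤ Δ) {a : V} {S : Set V}
    (hS : ∀ w ∈ S, G.Reachable a w) :
    ∃ D, S.ncard ≤ (Δ + 1) ^ D ∧ Nonempty (pathGraph (D + 1) ↪g G) := by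
  obtain ⟨w, hw, hmax⟩ :=
    Set.exists_max_image (insert a S) (G.dist a) (Set.toFinite _) (Set.insert_nonempty a S)
  have hreach : G.Reachable a w := by
    rcases hw with rfl | hw
    exacts [Reachable.refl _, hS w hw]
  obtain ⟨p, hp⟩ := hreach.exists_walk_length_eq_dist
  refine ⟨p.length, ?_, ⟨p.pathGraphEmbeddingOfLengthEqDist hp⟩⟩
  have hball : S ⊆ G.ball a (p.length + 1) := by
    intro x hx
    obtain ⟨q, hq⟩ := (hS x hx).exists_walk_length_eq_dist
    have hlen : q.length < p.length + 1 := by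
      have := hmax x (Set.mem_insert_of_mem _ hx)
      omega
    rw [mem_ball, edist_comm]
    exact (edist_le q).trans_lt (by exact_mod_cast hlen)
  exact (Set.ncard_le_ncard hball (Set.toFinite _)).trans (ncard_ball_le hdeg a _)

/-- A walk can only enter a new component of `G - X` right after a vertex of `X`. -/
theorem Walk.ncard_image_connectedComponentMk_induce_compl_le (X : Set V)
    [DecidablePred (· ∈ X)] (p : G.Walk u v) :
    ((G.induce Xᶜ).connectedComponentMk '' {w : ↥Xᶜ | ↑w ∈ p.support}).ncard ≤
      p.support.tail.countP (· ∈ X) + 1 := by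
  set f := (G.induce Xᶜ).connectedComponentMk
  have hvertex (x : V) : (f '' {w : ↥Xᶜ | ↑w = x}).Subsingleton :=
    Set.Subsingleton.image (fun a ha b hb => Subtype.ext (ha.trans hb.symm)) f
  induction p with
  | nil =>
    simpa using (Set.ncard_le_one (hvertex _).finite).2 (hvertex _)
  | @cons u w v h p ih =>
    have hsupp : {x : ↥Xᶜ | ↑x ∈ (cons h p).support} =
        {x : ↥Xᶜ | ↑x = u} ∪ {x : ↥Xᶜ | ↑x ∈ p.support} := by
      ext; simp
    have hcount := List.countP_cons (p := (· ∈ X)) (a := w) (l := p.support.tail)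
    rw [p.cons_tail_support] at hcount
    rw [hsupp, Set.image_union, support_cons, List.tail_cons, hcount]
    by_cases hw : w ∈ X
    · calc _ ≤ (f '' {x : ↥Xᶜ | ↑x = u}).ncard + (f '' {x | ↑x ∈ p.support}).ncard :=
            Set.ncard_union_le _ _
        _ ≤ 1 + (p.support.tail.countP (· ∈ X) + 1) :=
            add_le_add ((Set.ncard_le_one (hvertex _).finite).2 (hvertex _)) ih
        _ = _ := by simp [hw]; omega
    · have hsub : f '' {x : ↥Xᶜ | ↑x = u} ⊆ f '' {x | ↑x ∈ p.support} := by
        rintro _ ⟨x, rfl, rfl⟩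
        exact ⟨⟨w, hw⟩, p.start_mem_support,
          (ConnectedComponent.sound (show (G.induce Xᶜ).Adj x ⟨w, hw⟩ from h).reachable).symm⟩
      rw [Set.union_eq_right.2 hsub]
      simpa [hw] using ih

theorem Walk.IsPath.length_add_one_le_ncard_compl_add_ncard [Finite V] {p : G.Walk u v}
    (hp : p.IsPath) (X : Set V) :
    p.length + 1 ≤ {w : ↥Xᶜ | ↑w ∈ p.support}.ncard + X.ncard := by
  classical
  have hsupp : {w | w ∈ p.support} = ↑p.support.toFinset := by ext; simp
  have hcover : {w | w ∈ p.support} ⊆ Subtype.val '' {w : ↥Xᶜ | ↑w ∈ p.support} ∪ X := by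
    intro w hw
    by_cases hwX : w ∈ X
    exacts [Or.inr hwX, Or.inl ⟨⟨w, hwX⟩, hw, rfl⟩]
  calc p.length + 1 = {w | w ∈ p.support}.ncard := by
        rw [hsupp, Set.ncard_coe_finset, List.toFinset_card_of_nodup hp.support_nodup,
          Walk.length_support]
    _ ≤ (Subtype.val '' {w : ↥Xᶜ | ↑w ∈ p.support} ∪ X).ncard :=
        Set.ncard_le_ncard hcover (Set.toFinite _)
    _ ≤ _ := (Set.ncard_union_le _ _).trans_eq
        (by rw [Set.ncard_image_of_injective _ Subtype.val_injective])

end SimpleGraph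

namespace AlmostBoundedDegree

variable {V : Type*} {G : SimpleGraph V} {k Δ : ℕ}

theorem exists_ncard_neighborSet_induce_compl_le (hG : AlmostBoundedDegree G k Δ) :
    ∃ X : Set V, X.ncard ≤ k ∧ ∀ v : ↥Xᶜ, ((G.induce Xᶜ).neighborSet v).ncard ≤ Δ := by
  obtain ⟨X, hX, hdeg⟩ := hG
  refine ⟨X, hX, fun v => ?_⟩
  have hnbr : (G.induce Xᶜ).neighborSet v = Subtype.val ⁻¹' {w | w ∉ X ∧ G.Adj v w} := by
    ext w
    exact ⟨fun h => ⟨w.2, h⟩, And.right⟩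
  rw [hnbr, Set.ncard_preimage_of_injective_subset_range Subtype.val_injective
    fun w hw => ⟨⟨w, hw.1⟩, rfl⟩]
  exact hdeg v v.2

theorem exists_pathGraph_embedding_of_hasPathOfOrder [Finite V] {n : ℕ}
    (hG : AlmostBoundedDegree G k Δ) (hP : HasPathOfOrder G n) :
    ∃ m, n ≤ ((2 * k + 1) * (Δ + 1)) ^ m ∧ Nonempty (pathGraph m ↪g G) := by
  classical
  obtain ⟨X, hXk, hdeg⟩ := hG.exists_ncard_neighborSet_induce_compl_le
  obtain ⟨u, v, p, hp, rfl⟩ := hP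
  set S : Set ↥Xᶜ := {w | ↑w ∈ p.support}
  have hS : p.length + 1 ≤ S.ncard + k :=
    (hp.length_add_one_le_ncard_compl_add_ncard X).trans (by gcongr)
  rcases S.eq_empty_or_nonempty with hSe | hSne
  · refine ⟨1, ?_, ⟨(Walk.nil : G.Walk u u).pathGraphEmbeddingOfLengthEqDist (by simp)⟩⟩
    rw [hSe, Set.ncard_empty] at hS
    rw [pow_one]
    exact (by omega : p.length + 1 ≤ 2 * k + 1).trans (Nat.le_mul_of_pos_right _ Δ.succ_pos)
  set f := (G.induce Xᶜ).connectedComponentMk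
  obtain ⟨a, haS, hfiber⟩ := Set.exists_ncard_le_mul_ncard_fiber S.toFinite hSne f
  have hcomp : (f '' S).ncard ≤ k + 1 :=
    (p.ncard_image_connectedComponentMk_induce_compl_le X).trans <| by
      have := (hp.support_nodup.sublist p.support.tail_sublist).countP_mem_le_ncard
        (X := X) (Set.toFinite _)
      omega
  set F := {x ∈ S | f x = f a}
  obtain ⟨D, hD, ⟨e⟩⟩ := exists_pathGraph_embedding_of_forall_reachable hdeg (a := a) (S := F)
    fun w hw => ConnectedComponent.exact hw.2.symm
  refine ⟨D + 1, ?_, ⟨(Embedding.induce Xᶜ).comp e⟩⟩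
  have hF : 1 ≤ F.ncard :=
    Nat.one_le_iff_ne_zero.2 (Set.ncard_ne_zero_of_mem ⟨haS, rfl⟩ (Set.toFinite _))
  calc p.length + 1 ≤ (k + 1) * F.ncard + k :=
        hS.trans (by gcongr; exact hfiber.trans (Nat.mul_le_mul_right _ hcomp))
    _ ≤ (2 * k + 1) * F.ncard := by nlinarith
    _ ≤ (2 * k + 1) * (Δ + 1) ^ D := by gcongr
    _ ≤ (2 * k + 1) ^ (D + 1) * (Δ + 1) ^ (D + 1) := by
        gcongr
        · exact Nat.le_self_pow (Nat.succ_ne_zero D) _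
        · omega
        · omega
    _ = ((2 * k + 1) * (Δ + 1)) ^ (D + 1) := (mul_pow _ _ _).symm

end AlmostBoundedDegree

theorem inv_one_add_logb_mul_logb_le {B n m : ℕ} (hB : 1 ≤ B) (h : n ≤ B ^ m) :
    (1 + logb 2 B)⁻¹ * logb 2 n ≤ m := by
  have hlogB : 0 ≤ logb 2 (B : ℝ) := logb_nonneg one_lt_two (by exact_mod_cast hB)
  rw [inv_mul_le_iff₀ (by positivity)]
  rcases n.eq_zero_or_pos with rfl | hn
  · simp only [CharP.cast_eq_zero, logb_zero]
    positivity
  calc logb 2 (n : ℝ) ≤ logb 2 ((B : ℝ) ^ m) :=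
        logb_le_logb_of_le one_lt_two (by exact_mod_cast hn) (by exact_mod_cast h)
    _ = m * logb 2 B := logb_pow _ _ _
    _ ≤ (1 + logb 2 B) * m := by nlinarith

theorem stmt9_general (Δ k : ℕ) :
    ∃ c : ℝ, 0 < c ∧
      ∀ {V : Type} [Fintype V] (G : SimpleGraph V) (n : ℕ),
        AlmostBoundedDegree G k Δ → HasPathOfOrder G n →
        HasInducedPathGE G (c * Real.logb 2 n) := by
  have hB : 1 ≤ (2 * k + 1) * (Δ + 1) := Nat.one_le_iff_ne_zero.2 (by positivity)
  have hlogB : 0 ≤ logb 2 ((2 * k + 1) * (Δ + 1) : ℕ) :=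
    logb_nonneg one_lt_two (Nat.one_le_cast.2 hB)
  refine ⟨(1 + logb 2 ((2 * k + 1) * (Δ + 1) : ℕ))⁻¹, by positivity, fun G n hG hP => ?_⟩
  obtain ⟨m, hnm, hemb⟩ := hG.exists_pathGraph_embedding_of_hasPathOfOrder hP
  exact ⟨m, inv_one_add_logb_mul_logb_le hB hnm, hemb⟩

theorem stmt9 (Δ k : ℕ) (hΔ : 0 < Δ) (hk : 0 < k) :
    ∃ c : ℝ, 0 < c ∧
      ∀ {V : Type} [Fintype V] (G : SimpleGraph V) (n : ℕ),
        AlmostBoundedDegree G k Δ → HasPathOfOrder G n →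
        HasInducedPathGE G (c * Real.logb 2 n) :=
  stmt9_general Δ k
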